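/- arXiv:2510.22288 — 6 statements merged into one kernel-verified Lean document; each statement's English description precedes it below -/
import Mathlib

section
/- Fix ρ ∈ [0,1), M > 0, real numbers σ_Y, λ, Y ∈ ℝ, μ_Y > 0, and Z ≥ 0. Then the one-step cost Γ ↦ c_λ^ρ(Γ, M, Y, Z) := σ_Y + μ_Y·Z − λ·μ_Y − λ·Z + (Z + μ_Y)·(2Y + Z + H_ρ(Γ, M)) is strictly increasing in Γ on [0, ∞). -/
/-!
Writing `c = 1 - ρ²`, the age-gap penalty splits as
`H_ρ(Γ, M) = c Γ + c ρ² M · Γ / (Γ + c M)`: a strictly increasing linear term plus a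
nonnegative multiple of the increasing map `Γ ↦ Γ / (Γ + c M)`. The cost is an affine
function of `H_ρ` with positive slope `Z + μ_Y`.
-/

open Set

/-- The age-gap penalty `H_ρ(Γ, M)`. -/
noncomputable def ageGapPenalty (ρ M Γ : ℝ) : ℝ :=
  Γ * (1 - ρ ^ 2 * Γ / (Γ + (1 - ρ ^ 2) * M))

lemma monotoneOn_div_add_const {d : ℝ} (hd : 0 < d) :
    MonotoneOn (fun x : ℝ => x / (x + d)) (Ici 0) := by
  intro x hx y hy hxy
  have hxd : 0 < x + d := by linarith [mem_Ici.mp hx]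
  have hyd : 0 < y + d := by linarith [mem_Ici.mp hy]
  rw [div_le_div_iff₀ hxd hyd]
  nlinarith

lemma ageGapPenalty_eq {ρ M Γ : ℝ} (h : Γ + (1 - ρ ^ 2) * M ≠ 0) :
    ageGapPenalty ρ M Γ =
      (1 - ρ ^ 2) * Γ + (1 - ρ ^ 2) * ρ ^ 2 * M * (Γ / (Γ + (1 - ρ ^ 2) * M)) := by
  unfold ageGapPenalty
  field_simp
  ring

lemma ageGapPenalty_strictMonoOn {ρ M : ℝ} (hρ : ρ ^ 2 < 1) (hM : 0 < M) :
    StrictMonoOn (ageGapPenalty ρ M) (Ici 0) := by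
  have hc : 0 < 1 - ρ ^ 2 := sub_pos.mpr hρ
  have hcM : 0 < (1 - ρ ^ 2) * M := mul_pos hc hM
  have hlin : StrictMonoOn (fun Γ : ℝ => (1 - ρ ^ 2) * Γ) (Ici 0) :=
    (strictMono_mul_left_of_pos hc).strictMonoOn _
  have hfrac : MonotoneOn
      (fun Γ : ℝ => (1 - ρ ^ 2) * ρ ^ 2 * M * (Γ / (Γ + (1 - ρ ^ 2) * M))) (Ici 0) :=
    fun x hx y hy hxy =>
      mul_le_mul_of_nonneg_left (monotoneOn_div_add_const hcM hx hy hxy) (by positivity)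
  refine (hlin.add_monotone hfrac).congr fun Γ hΓ => (ageGapPenalty_eq ?_).symm
  linarith [mem_Ici.mp hΓ]

/-- The one-step cost
`c_λ^ρ(Γ, M, Y, Z) = σ_Y + μ_Y Z − λ μ_Y − λ Z + (Z + μ_Y)(2Y + Z + H_ρ(Γ, M))`,
where `H_ρ(Γ, M) = Γ·(1 − ρ²Γ/(Γ + (1−ρ²)M))`, is strictly increasing in the age gap `Γ`
on `[0, ∞)`, for `ρ ∈ [0,1)`, `M > 0`, `μ_Y > 0` and `Z ≥ 0`. (Lemma 2, second claim.) -/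
theorem one_step_cost_strictMonoOn (ρ M σY lam Y μY Z : ℝ)
    (hρ0 : 0 ≤ ρ) (hρ1 : ρ < 1) (hM : 0 < M) (hμY : 0 < μY) (hZ : 0 ≤ Z) :
    StrictMonoOn (fun Γ : ℝ => σY + μY * Z - lam * μY - lam * Z +
      (Z + μY) * (2 * Y + Z + Γ * (1 - ρ ^ 2 * Γ / (Γ + (1 - ρ ^ 2) * M))))
      (Set.Ici (0 : ℝ)) := by
  have hslope : 0 < Z + μY := by linarith
  have hcost : StrictMono fun h : ℝ =>
      σY + μY * Z - lam * μY - lam * Z + (Z + μY) * (2 * Y + Z + h) := fun a b hab => by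
    dsimp only
    gcongr
  have hρ : ρ ^ 2 < 1 := pow_lt_one₀ hρ0 hρ1 two_ne_zero
  exact hcost.comp_strictMonoOn (ageGapPenalty_strictMonoOn hρ hM)
end

section
/- Let ℓ ∈ ℕ, let w : ℕ → ℝ be a sequence with w_k ≥ 0 for all k, and let b : ℕ → Bool be an arbitrary branch-indicator sequence. Suppose Γ, Γ' : ℕ → ℝ are sequences with Γ_k ≥ 0 for all k, satisfying: (i) Γ_k = Γ'_k for all k ≤ ℓ; (ii) Γ_{ℓ+1} = Γ_ℓ + w_ℓ and Γ'_{ℓ+1} = w_ℓ; and (iii) for every k ≥ ℓ+1, Γ_{k+1} = Γ_k + w_k if b_k = true and Γ_{k+1} = w_k if b_k = false, and likewise Γ'_{k+1} = Γ'_k + w_k if b_k = true and Γ'_{k+1} = w_k if b_k = false. Then Γ'_k ≤ Γ_k for all k ∈ ℕ. -/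
theorem ite_add_le_ite_add {α : Type*} [Add α] [Preorder α] [AddRightMono α]
    (c : Bool) {x y : α} (w : α) (h : x ≤ y) :
    (if c then x + w else w) ≤ (if c then y + w else w) := by
  cases c
  · exact le_rfl
  · exact add_le_add_left h w

theorem age_gap_trajectory_comparison_general (ℓ : ℕ) (w : ℕ → ℝ)
    (b : ℕ → Bool) (Γ Γ' : ℕ → ℝ) (hΓnonneg : ∀ k, 0 ≤ Γ k)
    (hagree : ∀ k ≤ ℓ, Γ k = Γ' k)
    (hstep : Γ (ℓ + 1) = Γ ℓ + w ℓ) (hstep' : Γ' (ℓ + 1) = w ℓ)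
    (hrec : ∀ k, ℓ + 1 ≤ k → Γ (k + 1) = if b k then Γ k + w k else w k)
    (hrec' : ∀ k, ℓ + 1 ≤ k → Γ' (k + 1) = if b k then Γ' k + w k else w k) :
    ∀ k, Γ' k ≤ Γ k := by
  intro k
  rcases le_or_gt k ℓ with hk | hk
  · exact (hagree k hk).ge
  induction k, Nat.succ_le_of_lt hk using Nat.le_induction with
  | base =>
    rw [hstep, hstep']
    exact le_add_of_nonneg_left (hΓnonneg ℓ)
  | succ k hℓk ih =>
    rw [hrec k hℓk, hrec' k hℓk]
    exact ite_add_le_ite_add (b k) (w k) (ih hℓk)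

/-- Trajectory-comparison lemma underlying optimality of MAF scheduling
(Theorem 2 / Appendix B). Two age-gap trajectories `Γ` and `Γ'` share the same
interval lengths `w` and the same branch decisions `b`, agree up to epoch `ℓ`,
and at epoch `ℓ` the primed system resets (`Γ'_{ℓ+1} = w_ℓ`) while the unprimed
system grows (`Γ_{ℓ+1} = Γ_ℓ + w_ℓ`). Then `Γ'_k ≤ Γ_k` for all `k`. -/
theorem age_gap_trajectory_comparison (ℓ : ℕ) (w : ℕ → ℝ) (hw : ∀ k, 0 ≤ w k)
    (b : ℕ → Bool) (Γ Γ' : ℕ → ℝ) (hΓnonneg : ∀ k, 0 ≤ Γ k)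
    (hagree : ∀ k ≤ ℓ, Γ k = Γ' k)
    (hstep : Γ (ℓ + 1) = Γ ℓ + w ℓ) (hstep' : Γ' (ℓ + 1) = w ℓ)
    (hrec : ∀ k, ℓ + 1 ≤ k → Γ (k + 1) = if b k then Γ k + w k else w k)
    (hrec' : ∀ k, ℓ + 1 ≤ k → Γ' (k + 1) = if b k then Γ' k + w k else w k) :
    ∀ k, Γ' k ≤ Γ k :=
  age_gap_trajectory_comparison_general ℓ w b Γ Γ' hΓnonneg hagree hstep hstep' hrec hrec'
end

section
/- Let (Ω, F, P) be a probability space, ρ ∈ (0,1), and y_u, z_u > 0. Let (Y_n)_{n≥0} be an i.i.d. sequence of random variables with 0 ≤ Y_n ≤ y_u almost surely and μ := E[Y_0] > 0, and let (Z_n)_{n≥0} be arbitrary random variables with 0 ≤ Z_n ≤ z_u almost surely. Let M_0 > 0 and Γ_0 ∈ [0, y_u + z_u] be constants and define recursively M_{n+1} = M_n + Y_n + Z_n and Γ_{n+1} = Y_n + Z_n. Then lim_{n→∞} (1/n)·Σ_{i=0}^{n−1} E[(Z_i + μ)·ρ²Γ_i²/(Γ_i + (1−ρ²)M_i)] = 0.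 -/
/-!
Along almost every sample path the envelope `M_i` dominates `M₀ + Y_0 + ⋯ + Y_{i-1}`, which
grows linearly by the strong law of large numbers since `E[Y_0] > 0`, while the numerator of the
cost stays bounded because `Γ_i ≤ y_u + z_u`. Hence the cost tends to `0` almost surely under a
constant bound, so its expectation tends to `0` by dominated convergence, and so does the Cesàro
average.
-/

open MeasureTheory Filter ProbabilityTheory Topology Finset

/-- The summand `ψ_λ − c_λ^ρ`, at waiting time `z`, age gap `Γ` and envelope `M`. -/
noncomputable def ageGapCost (ρ μ z Γ M : ℝ) : ℝ :=
  (z + μ) * ρ ^ 2 * Γ ^ 2 / (Γ + (1 - ρ ^ 2) * M)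

section ageGapCost

variable {ρ μ z zu Γ g M m : ℝ}

lemma ageGapCost_nonneg (hρ : 0 < 1 - ρ ^ 2) (hμ : 0 ≤ μ) (hz : 0 ≤ z) (hΓ : 0 ≤ Γ)
    (hM : 0 ≤ M) : 0 ≤ ageGapCost ρ μ z Γ M := by
  unfold ageGapCost
  positivity

lemma ageGapCost_le (hρ : 0 < 1 - ρ ^ 2) (hμ : 0 ≤ μ) (hz : z ∈ Set.Icc 0 zu)
    (hΓ : Γ ∈ Set.Icc 0 g) (hm : 0 < m) (hmM : m ≤ M) :
    ageGapCost ρ μ z Γ M ≤ (zu + μ) * ρ ^ 2 * g ^ 2 / (1 - ρ ^ 2) / m := by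
  obtain ⟨hz0, hzu⟩ := hz
  obtain ⟨hΓ0, hΓg⟩ := hΓ
  have hzμ : 0 ≤ zu + μ := by linarith
  have hnum : (z + μ) * ρ ^ 2 * Γ ^ 2 ≤ (zu + μ) * ρ ^ 2 * g ^ 2 :=
    mul_le_mul (mul_le_mul_of_nonneg_right (by linarith) (sq_nonneg ρ))
      (pow_le_pow_left₀ hΓ0 hΓg 2) (sq_nonneg Γ) (mul_nonneg hzμ (sq_nonneg ρ))
  have hden : (1 - ρ ^ 2) * m ≤ Γ + (1 - ρ ^ 2) * M := by nlinarith
  rw [div_div]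
  exact div_le_div₀ (by positivity) hnum (by positivity) hden

end ageGapCost

lemma add_sum_le_of_succ_eq {m y z : ℕ → ℝ} (hz : ∀ n, 0 ≤ z n)
    (hrec : ∀ n, m (n + 1) = m n + y n + z n) (n : ℕ) :
    m 0 + ∑ k ∈ range n, y k ≤ m n := by
  induction n with
  | zero => simp
  | succ n ih =>
    rw [sum_range_succ, hrec]
    linarith [hz n]

lemma ae_tendsto_sum_range_atTop {Ω : Type*} [MeasurableSpace Ω] {P : Measure Ω}
    {Y : ℕ → Ω → ℝ} (hint : Integrable (Y 0) P) (hindep : Pairwise fun i j ↦ Y i ⟂ᵢ[P] Y j)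
    (hident : ∀ n, IdentDistrib (Y n) (Y 0) P P) (hpos : 0 < ∫ ω, Y 0 ω ∂P) :
    ∀ᵐ ω ∂P, Tendsto (fun n ↦ ∑ k ∈ range n, Y k ω) atTop atTop := by
  filter_upwards [strong_law_ae_real Y hint hindep hident] with ω hω
  exact tendsto_natCast_atTop_atTop.num hpos hω

lemma tendsto_integral_zero_of_le_div_of_tendsto_atTop {Ω : Type*} [MeasurableSpace Ω]
    {P : Measure Ω} [IsFiniteMeasure P] {f S : ℕ → Ω → ℝ} {c m₀ : ℝ} (hm₀ : 0 < m₀)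
    (hf : ∀ i, AEStronglyMeasurable (f i) P)
    (hbound : ∀ᵐ ω ∂P, ∀ i, 0 ≤ S i ω ∧ 0 ≤ f i ω ∧ f i ω ≤ c / (m₀ + S i ω))
    (hS : ∀ᵐ ω ∂P, Tendsto (fun i ↦ S i ω) atTop atTop) :
    Tendsto (fun i ↦ ∫ ω, f i ω ∂P) atTop (𝓝 0) := by
  have hdom : ∀ i, ∀ᵐ ω ∂P, ‖f i ω‖ ≤ c / m₀ := fun i ↦ by
    filter_upwards [hbound] with ω hω
    obtain ⟨hS0, hf0, hfS⟩ := hω i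
    have hc : 0 ≤ c := by
      simpa using (le_div_iff₀ (by linarith : 0 < m₀ + S i ω)).mp (hf0.trans hfS)
    rw [Real.norm_of_nonneg hf0]
    exact hfS.trans (div_le_div_of_nonneg_left hc hm₀ (by linarith))
  have hlim : ∀ᵐ ω ∂P, Tendsto (fun i ↦ f i ω) atTop (𝓝 0) := by
    filter_upwards [hbound, hS] with ω hω hSω
    exact tendsto_of_tendsto_of_tendsto_of_le_of_le tendsto_const_nhds
      (tendsto_const_nhds.div_atTop (tendsto_atTop_add_const_left _ m₀ hSω))
      (fun i ↦ (hω i).2.1) (fun i ↦ (hω i).2.2)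
  simpa using tendsto_integral_of_dominated_convergence _ hf (integrable_const _) hdom hlim

theorem average_cost_mdp_equivalence_general {Ω : Type*} [MeasurableSpace Ω]
    (P : Measure Ω) [IsProbabilityMeasure P]
    (ρ : ℝ) (hρ0 : 0 < ρ) (hρ1 : ρ < 1)
    (yu zu : ℝ)
    (Y Z : ℕ → Ω → ℝ)
    (hYmeas : ∀ n, Measurable (Y n)) (hZmeas : ∀ n, Measurable (Z n))
    (hYindep : iIndepFun Y P)
    (hYident : ∀ n, IdentDistrib (Y n) (Y 0) P P)
    (hYbound : ∀ n, ∀ᵐ ω ∂P, Y n ω ∈ Set.Icc (0 : ℝ) yu)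
    (hZbound : ∀ n, ∀ᵐ ω ∂P, Z n ω ∈ Set.Icc (0 : ℝ) zu)
    (μ : ℝ) (hμdef : μ = ∫ ω, Y 0 ω ∂P) (hμpos : 0 < μ)
    (M Γ : ℕ → Ω → ℝ)
    (M₀ Γ₀ : ℝ) (hM₀ : 0 < M₀) (hΓ₀ : Γ₀ ∈ Set.Icc (0 : ℝ) (yu + zu))
    (hM0 : ∀ ω, M 0 ω = M₀) (hΓ0 : ∀ ω, Γ 0 ω = Γ₀)
    (hMrec : ∀ n ω, M (n + 1) ω = M n ω + Y n ω + Z n ω)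
    (hΓrec : ∀ n ω, Γ (n + 1) ω = Y n ω + Z n ω) :
    Tendsto (fun n : ℕ => (1 / (n : ℝ)) * ∑ i ∈ Finset.range n,
        ∫ ω, (Z i ω + μ) * ρ ^ 2 * (Γ i ω) ^ 2 / (Γ i ω + (1 - ρ ^ 2) * M i ω) ∂P)
      atTop (nhds 0) := by
  have hρ : 0 < 1 - ρ ^ 2 := by nlinarith
  have hMmeas : ∀ n, Measurable (M n) := by
    intro n
    induction n with
    | zero => rw [funext hM0]; exact measurable_const
    | succ n ih => rw [funext (hMrec n)]; fun_prop
  have hΓmeas : ∀ n, Measurable (Γ n) := by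
    rintro (_ | n)
    · rw [funext hΓ0]; exact measurable_const
    · rw [funext (hΓrec n)]; fun_prop
  have hYint : Integrable (Y 0) P := by
    refine .of_bound (hYmeas 0).aestronglyMeasurable yu ?_
    filter_upwards [hYbound 0] with ω hω
    rw [Real.norm_of_nonneg hω.1]
    exact hω.2
  have hS := ae_tendsto_sum_range_atTop hYint (fun i j hij ↦ hYindep.indepFun hij) hYident
    (hμdef ▸ hμpos)
  have hbound : ∀ᵐ ω ∂P, ∀ i, 0 ≤ ∑ k ∈ range i, Y k ω ∧
      0 ≤ ageGapCost ρ μ (Z i ω) (Γ i ω) (M i ω) ∧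
      ageGapCost ρ μ (Z i ω) (Γ i ω) (M i ω) ≤
        (zu + μ) * ρ ^ 2 * (yu + zu) ^ 2 / (1 - ρ ^ 2) / (M₀ + ∑ k ∈ range i, Y k ω) := by
    filter_upwards [ae_all_iff.2 hYbound, ae_all_iff.2 hZbound] with ω hY hZ i
    have hS0 : 0 ≤ ∑ k ∈ range i, Y k ω := sum_nonneg fun k _ ↦ (hY k).1
    have hΓi : Γ i ω ∈ Set.Icc 0 (yu + zu) := by
      cases i with
      | zero => exact hΓ0 ω ▸ hΓ₀
      | succ n =>
        rw [hΓrec]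
        constructor <;> linarith [(hY n).1, (hY n).2, (hZ n).1, (hZ n).2]
    have hMi : M₀ + ∑ k ∈ range i, Y k ω ≤ M i ω :=
      hM0 ω ▸ add_sum_le_of_succ_eq (m := (M · ω)) (fun n ↦ (hZ n).1) (fun n ↦ hMrec n ω) i
    exact ⟨hS0, ageGapCost_nonneg hρ hμpos.le (hZ i).1 hΓi.1 (by linarith),
      ageGapCost_le hρ hμpos.le (hZ i) hΓi (by linarith) hMi⟩
  have hcost := tendsto_integral_zero_of_le_div_of_tendsto_atTop hM₀
    (fun i ↦ by unfold ageGapCost; exact Measurable.aestronglyMeasurable (by fun_prop))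
    hbound hS
  simpa only [one_div, ageGapCost] using hcost.cesaro

/-- Theorem 3 of the paper (average-cost equivalence of MDP 2 and MDP 3 under MAF
scheduling): with i.i.d. bounded delays `Y_n` of positive mean `μ`, arbitrary bounded
waiting times `Z_n`, envelope `M_{n+1} = M_n + Y_n + Z_n` and age gap
`Γ_{n+1} = Y_n + Z_n`, the Cesàro averages of
`E[(Z_i + μ)·ρ²Γ_i²/(Γ_i + (1−ρ²)M_i)]` tend to `0`. -/
theorem average_cost_mdp_equivalence {Ω : Type*} [MeasurableSpace Ω]
    (P : Measure Ω) [IsProbabilityMeasure P]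
    (ρ : ℝ) (hρ0 : 0 < ρ) (hρ1 : ρ < 1)
    (yu zu : ℝ) (hyu : 0 < yu) (hzu : 0 < zu)
    (Y Z : ℕ → Ω → ℝ)
    (hYmeas : ∀ n, Measurable (Y n)) (hZmeas : ∀ n, Measurable (Z n))
    (hYindep : iIndepFun Y P)
    (hYident : ∀ n, IdentDistrib (Y n) (Y 0) P P)
    (hYbound : ∀ n, ∀ᵐ ω ∂P, Y n ω ∈ Set.Icc (0 : ℝ) yu)
    (hZbound : ∀ n, ∀ᵐ ω ∂P, Z n ω ∈ Set.Icc (0 : ℝ) zu)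
    (μ : ℝ) (hμdef : μ = ∫ ω, Y 0 ω ∂P) (hμpos : 0 < μ)
    (M Γ : ℕ → Ω → ℝ)
    (M₀ Γ₀ : ℝ) (hM₀ : 0 < M₀) (hΓ₀ : Γ₀ ∈ Set.Icc (0 : ℝ) (yu + zu))
    (hM0 : ∀ ω, M 0 ω = M₀) (hΓ0 : ∀ ω, Γ 0 ω = Γ₀)
    (hMrec : ∀ n ω, M (n + 1) ω = M n ω + Y n ω + Z n ω)
    (hΓrec : ∀ n ω, Γ (n + 1) ω = Y n ω + Z n ω) :
    Tendsto (fun n : ℕ => (1 / (n : ℝ)) * ∑ i ∈ Finset.range n,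
        ∫ ω, (Z i ω + μ) * ρ ^ 2 * (Γ i ω) ^ 2 / (Γ i ω + (1 - ρ ^ 2) * M i ω) ∂P)
      atTop (nhds 0) :=
  average_cost_mdp_equivalence_general P ρ hρ0 hρ1 yu zu Y Z hYmeas hZmeas hYindep hYident hYbound
    hZbound μ hμdef hμpos M Γ M₀ Γ₀ hM₀ hΓ₀ hM0 hΓ0 hMrec hΓrec
end

section
/- Let ρ ∈ [0,1) and 0 < t₁ < t₂ ≤ t. Let Σ := [[t₁, ρ·t₁], [ρ·t₁, t₂]]. Then Σ is invertible and the row vector [t₁, ρ·t₂] multiplied by Σ⁻¹ equals [G_{t,ρ}(Δ₁, Δ₂), Q_{t,ρ}(Δ₁, Δ₂)], where Δ₁ := t − t₁ and Δ₂ := t − t₂; equivalently, this row vector equals [(1−ρ²)t₂/(t₂ − ρ²t₁), ρ(t₂ − t₁)/(t₂ − ρ²t₁)]. -/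
open Matrix

/-! The covariance matrix has determinant `t₁ (t₂ - ρ² t₁) > 0`, so it is invertible, and
multiplying the row vector by the adjugate gives both weights with the common factor `t₁`,
which cancels against the determinant. The `G, Q` form is the same expression after
substituting `Δᵢ = t - tᵢ`. -/

/-- For a singular matrix both sides are `0`, since `⁻¹` and `/ 0` are `0` there. -/
theorem Matrix.row_mul_inv_fin_two {K : Type*} [Field K] (a b p q r s : K) :
    !![a, b] * !![p, q; r, s]⁻¹ =
      !![(a * s - b * r) / (p * s - q * r), (b * p - a * q) / (p * s - q * r)] := by
  rw [inv_def, adjugate_fin_two_of, det_fin_two_of]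
  ext i j
  fin_cases i; fin_cases j <;>
    simp only [Ring.inverse_eq_inv', smul_of, smul_cons, smul_eq_mul, mul_neg, smul_empty,
      Fin.zero_eta, Fin.isValue, Fin.mk_one, mul_apply, of_apply, cons_val', cons_val_fin_one,
      cons_val_zero, cons_val_one, Fin.sum_univ_two] <;> ring

theorem covariance_det_eq {K : Type*} [CommRing K] (ρ t₁ t₂ : K) :
    (!![t₁, ρ * t₁; ρ * t₁, t₂] : Matrix (Fin 2) (Fin 2) K).det = t₁ * (t₂ - ρ ^ 2 * t₁) := by
  rw [det_fin_two_of]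
  ring

theorem fusion_weights_eq {K : Type*} [Field K] {ρ t₁ t₂ : K} (ht₁ : t₁ ≠ 0)
    (hd : t₂ - ρ ^ 2 * t₁ ≠ 0) :
    (!![t₁, ρ * t₂] : Matrix (Fin 1) (Fin 2) K) *
        (!![t₁, ρ * t₁; ρ * t₁, t₂] : Matrix (Fin 2) (Fin 2) K)⁻¹ =
      !![(1 - ρ ^ 2) * t₂ / (t₂ - ρ ^ 2 * t₁), ρ * (t₂ - t₁) / (t₂ - ρ ^ 2 * t₁)] := by
  have hdet : t₁ * t₂ - ρ * t₁ * (ρ * t₁) ≠ 0 := by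
    rw [show t₁ * t₂ - ρ * t₁ * (ρ * t₁) = t₁ * (t₂ - ρ ^ 2 * t₁) by ring]
    exact mul_ne_zero ht₁ hd
  rw [row_mul_inv_fin_two]
  congr 2
  field_simp [hdet, hd]

theorem fusion_weights_identity_general (ρ t₁ t₂ t : ℝ) (hρ0 : 0 ≤ ρ) (hρ1 : ρ < 1)
    (ht₁ : 0 < t₁) (h12 : t₁ < t₂) :
    IsUnit (!![t₁, ρ * t₁; ρ * t₁, t₂] : Matrix (Fin 2) (Fin 2) ℝ) ∧
    (!![t₁, ρ * t₂] : Matrix (Fin 1) (Fin 2) ℝ) *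
        (!![t₁, ρ * t₁; ρ * t₁, t₂] : Matrix (Fin 2) (Fin 2) ℝ)⁻¹ =
      !![(1 - ρ ^ 2) * (t - (t - t₂)) / (t - (t - t₂) - ρ ^ 2 * (t - (t - t₁))),
         ρ * ((t - t₁) - (t - t₂)) / (t - (t - t₂) - ρ ^ 2 * (t - (t - t₁)))] ∧
    (!![t₁, ρ * t₂] : Matrix (Fin 1) (Fin 2) ℝ) *
        (!![t₁, ρ * t₁; ρ * t₁, t₂] : Matrix (Fin 2) (Fin 2) ℝ)⁻¹ =
      !![(1 - ρ ^ 2) * t₂ / (t₂ - ρ ^ 2 * t₁), ρ * (t₂ - t₁) / (t₂ - ρ ^ 2 * t₁)] := by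
  have hρ2 : ρ ^ 2 < 1 := by nlinarith
  have hd : 0 < t₂ - ρ ^ 2 * t₁ := by nlinarith
  have hweights := fusion_weights_eq ht₁.ne' hd.ne'
  refine ⟨?_, ?_, hweights⟩
  · rw [isUnit_iff_isUnit_det, covariance_det_eq, isUnit_iff_ne_zero]
    positivity
  · simpa only [sub_sub_cancel, sub_sub_sub_cancel_left] using hweights

/-- Fusion weights of the MMSE estimator (Theorem 1, stale-source case): for
`ρ ∈ [0,1)` and `0 < t₁ < t₂ ≤ t`, the covariance matrix
`Σ = [[t₁, ρ t₁], [ρ t₁, t₂]]` is invertible and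
`[t₁, ρ t₂]·Σ⁻¹ = [G_{t,ρ}(Δ₁,Δ₂), Q_{t,ρ}(Δ₁,Δ₂)]` where `Δ₁ = t − t₁`,
`Δ₂ = t − t₂`, `G_{t,ρ}(x,y) = (1−ρ²)(t−y)/(t−y−ρ²(t−x))` and
`Q_{t,ρ}(x,y) = ρ(x−y)/(t−y−ρ²(t−x))`; equivalently this row vector equals
`[(1−ρ²)t₂/(t₂ − ρ²t₁), ρ(t₂ − t₁)/(t₂ − ρ²t₁)]`. -/
theorem fusion_weights_identity (ρ t₁ t₂ t : ℝ) (hρ0 : 0 ≤ ρ) (hρ1 : ρ < 1)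
    (ht₁ : 0 < t₁) (h12 : t₁ < t₂) (h2t : t₂ ≤ t) :
    IsUnit (!![t₁, ρ * t₁; ρ * t₁, t₂] : Matrix (Fin 2) (Fin 2) ℝ) ∧
    (!![t₁, ρ * t₂] : Matrix (Fin 1) (Fin 2) ℝ) *
        (!![t₁, ρ * t₁; ρ * t₁, t₂] : Matrix (Fin 2) (Fin 2) ℝ)⁻¹ =
      !![(1 - ρ ^ 2) * (t - (t - t₂)) / (t - (t - t₂) - ρ ^ 2 * (t - (t - t₁))),
         ρ * ((t - t₁) - (t - t₂)) / (t - (t - t₂) - ρ ^ 2 * (t - (t - t₁)))] ∧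
    (!![t₁, ρ * t₂] : Matrix (Fin 1) (Fin 2) ℝ) *
        (!![t₁, ρ * t₁; ρ * t₁, t₂] : Matrix (Fin 2) (Fin 2) ℝ)⁻¹ =
      !![(1 - ρ ^ 2) * t₂ / (t₂ - ρ ^ 2 * t₁), ρ * (t₂ - t₁) / (t₂ - ρ ^ 2 * t₁)] :=
  fusion_weights_identity_general ρ t₁ t₂ t hρ0 hρ1 ht₁ h12
end

section
/- Let ρ ∈ [0,1) and 0 < t₂ ≤ t₁ ≤ t. Let Σ := [[t₁, ρ·t₂], [ρ·t₂, t₂]] and let v be the row vector [ρ·t₁, t₂]. Then Σ is invertible and t − v·Σ⁻¹·vᵀ = (t − t₂) − ρ²(t₁ − t₂)²/(t₁ − ρ²t₂). -/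
/-!
Condition on the source's own sample first (a Schur complement of `Σ`): it accounts for `t₂` of
the variance, and the other sample, after removing what `W_{t₂}^{(2)}` explains, has residual
variance `t₁ - ρ²t₂ > 0` and residual covariance `ρ(t₁ - t₂)` with `W_t^{(2)}`.
-/

open Matrix

namespace Matrix

variable {K : Type*} [Field K]

theorem inv_fin_two_of (a b c d : K) :
    (!![a, b; c, d])⁻¹ = (a * d - b * c)⁻¹ • !![d, -b; -c, a] := by
  rw [inv_def, det_fin_two_of, adjugate_fin_two_of, Ring.inverse_eq_inv]

theorem row_mul_inv_mul_transpose_fin_two_of (a b c d x y : K) :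
    (!![x, y] * (!![a, b; c, d])⁻¹ * (!![x, y] : Matrix (Fin 1) (Fin 2) K)ᵀ) 0 0 =
      (d * x ^ 2 - (b + c) * x * y + a * y ^ 2) / (a * d - b * c) := by
  rw [inv_fin_two_of]
  simp only [mul_apply, Fin.sum_univ_two, smul_apply, transpose_apply, of_apply, cons_val',
    cons_val_zero, cons_val_one, cons_val_fin_one, smul_eq_mul]
  ring

theorem det_fin_two_symm_eq_mul_schur (a b c : K) (hb : b ≠ 0) :
    det !![a, c; c, b] = b * (a - c ^ 2 / b) := by
  rw [det_fin_two_of]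
  field_simp

theorem row_mul_inv_mul_transpose_fin_two_symm (a b c x y : K) (hb : b ≠ 0)
    (hschur : a - c ^ 2 / b ≠ 0) :
    (!![x, y] * (!![a, c; c, b])⁻¹ * (!![x, y] : Matrix (Fin 1) (Fin 2) K)ᵀ) 0 0 =
      y ^ 2 / b + (x - c / b * y) ^ 2 / (a - c ^ 2 / b) := by
  rw [row_mul_inv_mul_transpose_fin_two_of, ← det_fin_two_of a c c b,
    det_fin_two_symm_eq_mul_schur _ _ _ hb, div_add_div _ _ hb hschur,
    div_eq_div_iff (mul_ne_zero hb hschur) (mul_ne_zero hb hschur)]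
  field_simp
  ring

end Matrix

theorem stale_source_mmse_general (ρ t₁ t₂ t : ℝ) (hρ0 : 0 ≤ ρ) (hρ1 : ρ < 1)
    (ht₂ : 0 < t₂) (h21 : t₂ ≤ t₁) :
    IsUnit (!![t₁, ρ * t₂; ρ * t₂, t₂] : Matrix (Fin 2) (Fin 2) ℝ) ∧
    t - ((!![ρ * t₁, t₂] : Matrix (Fin 1) (Fin 2) ℝ) *
          (!![t₁, ρ * t₂; ρ * t₂, t₂] : Matrix (Fin 2) (Fin 2) ℝ)⁻¹ *
          (!![ρ * t₁, t₂] : Matrix (Fin 1) (Fin 2) ℝ)ᵀ) 0 0 =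
      (t - t₂) - ρ ^ 2 * (t₁ - t₂) ^ 2 / (t₁ - ρ ^ 2 * t₂) := by
  have hschur : (ρ * t₂) ^ 2 / t₂ = ρ ^ 2 * t₂ := by field_simp
  have hρsq : ρ ^ 2 < 1 := pow_lt_one₀ hρ0 hρ1 two_ne_zero
  have hgap : 0 < t₁ - ρ ^ 2 * t₂ := by nlinarith [mul_pos ht₂ (sub_pos.2 hρsq)]
  refine ⟨?_, ?_⟩
  · rw [isUnit_iff_isUnit_det, det_fin_two_symm_eq_mul_schur _ _ _ ht₂.ne', hschur]
    exact (mul_pos ht₂ hgap).ne'.isUnit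
  · rw [row_mul_inv_mul_transpose_fin_two_symm _ _ _ _ _ ht₂.ne' (hschur ▸ hgap.ne'), hschur,
      div_mul_cancel₀ _ ht₂.ne', sq, mul_self_div_self, ← mul_sub, mul_pow]
    ring

/-- Conditional variance (MMSE) of the staler source (used in the expected MSE
formula ε(t)): for `ρ ∈ [0,1)` and `0 < t₂ ≤ t₁ ≤ t`, with covariance matrix
`Σ = [[t₁, ρ t₂], [ρ t₂, t₂]]` of the samples and covariance vector `v = [ρ t₁, t₂]`
of `W_t^{(2)}` with the samples, `Σ` is invertible and
`t − v·Σ⁻¹·vᵀ = (t − t₂) − ρ²(t₁ − t₂)²/(t₁ − ρ²t₂)`. -/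
theorem stale_source_mmse (ρ t₁ t₂ t : ℝ) (hρ0 : 0 ≤ ρ) (hρ1 : ρ < 1)
    (ht₂ : 0 < t₂) (h21 : t₂ ≤ t₁) (h1t : t₁ ≤ t) :
    IsUnit (!![t₁, ρ * t₂; ρ * t₂, t₂] : Matrix (Fin 2) (Fin 2) ℝ) ∧
    t - ((!![ρ * t₁, t₂] : Matrix (Fin 1) (Fin 2) ℝ) *
          (!![t₁, ρ * t₂; ρ * t₂, t₂] : Matrix (Fin 2) (Fin 2) ℝ)⁻¹ *
          (!![ρ * t₁, t₂] : Matrix (Fin 1) (Fin 2) ℝ)ᵀ) 0 0 =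
      (t - t₂) - ρ ^ 2 * (t₁ - t₂) ^ 2 / (t₁ - ρ ^ 2 * t₂) :=
  stale_source_mmse_general ρ t₁ t₂ t hρ0 hρ1 ht₂ h21
end

section
/- Let ρ ∈ [0,1), let S₁, S₂ ≥ 0 with M := max{S₁, S₂} > 0, let Y_prev ≥ 0 and Z ≥ 0 be real numbers, and set D := M + Y_prev. Let Y be a nonnegative random variable on a probability space (Ω, F, P) with E[Y] = μ and E[Y²] = σ (both finite). Define ε(t) := (t − S₁) + (t − S₂) − ρ²(S₁ − S₂)²/(max{S₁, S₂} − ρ²·min{S₁, S₂}) and q_ρ(S₁, S₂) := |S₁ − S₂|·(1 − ρ²|S₁ − S₂|/(max{S₁, S₂} − ρ²·min{S₁, S₂})). Then E[ ∫_{D}^{D + Y + Z} ε(t) dt ] = σ + μ·Z + (Z + μ)·(2·Y_prev + Z + q_ρ(S₁, S₂)). -/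
open MeasureTheory

/-! Since the fusion correction `C = ρ²(S₁ - S₂)²/(max{S₁, S₂} - ρ² min{S₁, S₂})` does not depend
on `t`, the error `ε(t) = 2t - S₁ - S₂ - C` integrates over `[D, D + s]` to
`s² + (2D - S₁ - S₂ - C) s`, and `2D - S₁ - S₂ - C = 2 Y_prev + q_ρ(S₁, S₂)` because `2 max{S₁, S₂} - S₁ - S₂ = |S₁ - S₂|`.
Taking `s = Y + Z`, the expectation only involves the first two moments of `Y`. -/

theorem two_nsmul_max_sub_sub_eq_abs {α : Type*} [AddCommGroup α] [LinearOrder α]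
    [IsOrderedAddMonoid α] (a b : α) : 2 • max a b - a - b = |a - b| := by
  rw [← max_sub_min_eq_abs', two_nsmul, sub_sub, ← min_add_max a b]
  abel

theorem abs_sub_mul_one_sub_div (a b c d : ℝ) :
    |a - b| * (1 - c * |a - b| / d) = 2 * max a b - a - b - c * (a - b) ^ 2 / d := by
  rw [two_mul, ← two_nsmul, two_nsmul_max_sub_sub_eq_abs, ← sq_abs (a - b)]
  ring

theorem integral_sub_add_sub_sub (a s u v c : ℝ) :
    ∫ t in a..a + s, ((t - u) + (t - v) - c) = s ^ 2 + (2 * a - u - v - c) * s := by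
  have hlin : IntervalIntegrable (fun t : ℝ => 2 * t) volume a (a + s) :=
    (continuous_const.mul continuous_id).intervalIntegrable _ _
  calc ∫ t in a..a + s, ((t - u) + (t - v) - c)
      = ∫ t in a..a + s, (2 * t - (u + v + c)) := by congr 1; ext t; ring
    _ = s ^ 2 + (2 * a - u - v - c) * s := by
      rw [intervalIntegral.integral_sub hlin intervalIntegrable_const,
        intervalIntegral.integral_const_mul, integral_id, intervalIntegral.integral_const,
        smul_eq_mul]
      ring

theorem integral_add_const_sq_add_mul {Ω : Type*} [MeasurableSpace Ω] (P : Measure Ω)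
    [IsProbabilityMeasure P] {X : Ω → ℝ} (hX : Integrable X P)
    (hX2 : Integrable (fun ω => X ω ^ 2) P) (z b : ℝ) :
    ∫ ω, ((X ω + z) ^ 2 + b * (X ω + z)) ∂P =
      ∫ ω, X ω ^ 2 ∂P + z * ∫ ω, X ω ∂P + (z + ∫ ω, X ω ∂P) * (z + b) := by
  have hexpand : (fun ω => (X ω + z) ^ 2 + b * (X ω + z)) =
      fun ω => X ω ^ 2 + (2 * z + b) * X ω + (z ^ 2 + b * z) := by
    ext ω; ring
  have hlin : Integrable (fun ω => (2 * z + b) * X ω) P := hX.const_mul _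
  have hquad : Integrable (fun ω => X ω ^ 2 + (2 * z + b) * X ω) P := hX2.add hlin
  rw [hexpand, integral_add hquad (integrable_const _), integral_add hX2 hlin,
    integral_const_mul, integral_const, probReal_univ, one_smul]
  ring

theorem expected_interval_mse_general {Ω : Type*} [MeasurableSpace Ω]
    (P : Measure Ω) [IsProbabilityMeasure P]
    (ρ S₁ S₂ Yprev Z μ σ : ℝ)
    (Y : Ω → ℝ)
    (hYint : Integrable Y P) (hY2int : Integrable (fun ω => (Y ω) ^ 2) P)
    (hμ : ∫ ω, Y ω ∂P = μ) (hσ : ∫ ω, (Y ω) ^ 2 ∂P = σ) :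
    ∫ ω, (∫ t in (max S₁ S₂ + Yprev)..(max S₁ S₂ + Yprev + Y ω + Z),
        ((t - S₁) + (t - S₂) -
          ρ ^ 2 * (S₁ - S₂) ^ 2 / (max S₁ S₂ - ρ ^ 2 * min S₁ S₂))) ∂P =
      σ + μ * Z + (Z + μ) * (2 * Yprev + Z +
        |S₁ - S₂| * (1 - ρ ^ 2 * |S₁ - S₂| / (max S₁ S₂ - ρ ^ 2 * min S₁ S₂))) := by
  have hinner : ∀ ω, ∫ t in (max S₁ S₂ + Yprev)..(max S₁ S₂ + Yprev + Y ω + Z),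
      ((t - S₁) + (t - S₂) - ρ ^ 2 * (S₁ - S₂) ^ 2 / (max S₁ S₂ - ρ ^ 2 * min S₁ S₂)) =
      (Y ω + Z) ^ 2 + (2 * Yprev +
        |S₁ - S₂| * (1 - ρ ^ 2 * |S₁ - S₂| / (max S₁ S₂ - ρ ^ 2 * min S₁ S₂))) * (Y ω + Z) := by
    intro ω
    rw [add_assoc _ (Y ω), integral_sub_add_sub_sub, abs_sub_mul_one_sub_div]
    ring
  simp only [hinner]
  rw [integral_add_const_sq_add_mul P hYint hY2int, hμ, hσ]
  ring

/-- Equation (21) of the paper: the expected MSE accumulated over one update interval.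
With last sampling times `S₁, S₂` (with `max{S₁,S₂} > 0`), previous delay `Y_prev`,
delivery time `D = max{S₁,S₂} + Y_prev`, waiting time `Z ≥ 0`, and a nonnegative random
next delay `Y` with `E[Y] = μ`, `E[Y²] = σ`, the expectation of
`∫_D^{D+Y+Z} ε(t) dt` equals `σ + μZ + (Z + μ)(2 Y_prev + Z + q_ρ(S₁, S₂))`, where
`ε(t) = (t − S₁) + (t − S₂) − ρ²(S₁ − S₂)²/(max{S₁,S₂} − ρ² min{S₁,S₂})` and
`q_ρ(S₁,S₂) = |S₁ − S₂|·(1 − ρ²|S₁ − S₂|/(max{S₁,S₂} − ρ² min{S₁,S₂}))`. -/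
theorem expected_interval_mse {Ω : Type*} [MeasurableSpace Ω]
    (P : Measure Ω) [IsProbabilityMeasure P]
    (ρ S₁ S₂ Yprev Z μ σ : ℝ) (hρ0 : 0 ≤ ρ) (hρ1 : ρ < 1)
    (hS₁ : 0 ≤ S₁) (hS₂ : 0 ≤ S₂) (hmax : 0 < max S₁ S₂)
    (hYprev : 0 ≤ Yprev) (hZ : 0 ≤ Z)
    (Y : Ω → ℝ) (hYmeas : Measurable Y) (hYnonneg : ∀ ω, 0 ≤ Y ω)
    (hYint : Integrable Y P) (hY2int : Integrable (fun ω => (Y ω) ^ 2) P)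
    (hμ : ∫ ω, Y ω ∂P = μ) (hσ : ∫ ω, (Y ω) ^ 2 ∂P = σ) :
    ∫ ω, (∫ t in (max S₁ S₂ + Yprev)..(max S₁ S₂ + Yprev + Y ω + Z),
        ((t - S₁) + (t - S₂) -
          ρ ^ 2 * (S₁ - S₂) ^ 2 / (max S₁ S₂ - ρ ^ 2 * min S₁ S₂))) ∂P =
      σ + μ * Z + (Z + μ) * (2 * Yprev + Z +
        |S₁ - S₂| * (1 - ρ ^ 2 * |S₁ - S₂| / (max S₁ S₂ - ρ ^ 2 * min S₁ S₂))) :=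
  expected_interval_mse_general P ρ S₁ S₂ Yprev Z μ σ Y hYint hY2int hμ hσ
end
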